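/- arXiv:1802.00677 — 4 statements merged into one kernel-verified Lean document; each statement's English description precedes it below -/
import Mathlib

section
/- Suppose the augmented data (ȳ, z) is multivariate normal with mean (F(k)β, ρF(ℓ)β + Gγ) and covariance V as in the SK-i model, and suppose the estimator V̂ of V is a random matrix independent of (ȳ, z) and almost surely invertible. Then the plug-in predictor Ẑ̂(x₀) = ρ fᵀ(x₀)β + gᵀ(x₀)γ + Cᵀ V̂⁻¹ [(ȳ, z) - H(β, γ)] satisfies E[Ẑ̂(x₀) - Z(x₀)] = 0, where H is the block design matrix [[F(k), 0],[ρF(ℓ), G]] and E[Z(x₀)] = ρ fᵀ(x₀)β + gᵀ(x₀)γ. -/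
open Matrix MeasureTheory ProbabilityTheory

noncomputable instance matrixMeasurableSpace {m n : Type*} :
    MeasurableSpace (Matrix m n ℝ) :=
  (inferInstance : MeasurableSpace (m → n → ℝ))

lemma measurable_entry {m n : Type*} (a : m) (b : n) :
    Measurable (fun M : Matrix m n ℝ => M a b) :=
  (measurable_pi_apply b).comp (measurable_pi_apply a)

lemma measurable_det {n : Type*} [DecidableEq n] [Fintype n] :
    Measurable (fun M : Matrix n n ℝ => M.det) := by
  simp only [Matrix.det_apply]
  exact Finset.measurable_sum _ fun σ _ =>
    (Finset.measurable_prod _ fun i _ => measurable_entry (σ i) i).const_smul _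

lemma measurable_inv_entry {n : Type*} [DecidableEq n] [Fintype n] (a b : n) :
    Measurable (fun M : Matrix n n ℝ => M⁻¹ a b) := by
  simp only [Matrix.inv_def, Matrix.smul_apply, Ring.inverse_eq_inv', smul_eq_mul,
    Matrix.adjugate_apply]
  apply (measurable_det.inv).mul
  have hupd : Measurable (fun M : Matrix n n ℝ => M.updateRow b (Pi.single a 1)) := by
    apply measurable_pi_lambda
    intro i
    apply measurable_pi_lambda
    intro j
    simp only [Matrix.updateRow_apply]
    by_cases h : i = b <;> simp [h, measurable_entry i j, measurable_const]
  exact measurable_det.comp hupd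

/-- If the augmented data `YZ = (ȳ, z)` has mean `H (β, γ)` with
`H = [[F(k), 0],[ρF(ℓ), G]]`, and the random matrix `V̂` is independent of `YZ`,
then the plug-in predictor `Ẑ̂(x₀) = ρ fᵀ(x₀)β + gᵀ(x₀)γ + Cᵀ V̂⁻¹ (YZ - H(β,γ))`
is unbiased for `Z(x₀)`, whose mean is `ρ fᵀ(x₀)β + gᵀ(x₀)γ`. -/
theorem plug_in_predictor_unbiased {Ω : Type*} [MeasurableSpace Ω]
    (P : Measure Ω) [IsProbabilityMeasure P]
    {k l p q : ℕ}
    (Fk : Matrix (Fin k) (Fin p) ℝ) (Fl : Matrix (Fin l) (Fin p) ℝ)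
    (Gm : Matrix (Fin l) (Fin q) ℝ) (ρ : ℝ)
    (H : Matrix (Fin k ⊕ Fin l) (Fin p ⊕ Fin q) ℝ)
    (hH : H = Matrix.fromBlocks Fk 0 (ρ • Fl) Gm)
    (β : Fin p → ℝ) (γ : Fin q → ℝ)
    (f₀ : Fin p → ℝ) (g₀ : Fin q → ℝ)
    (C : (Fin k ⊕ Fin l) → ℝ)
    (YZ : Ω → (Fin k ⊕ Fin l) → ℝ) (hYZmeas : Measurable YZ)
    (hYZint : ∀ j, Integrable (fun ω => YZ ω j) P)
    (hmean : ∀ j, ∫ ω, YZ ω j ∂P = (H *ᵥ Sum.elim β γ) j)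
    (Vhat : Ω → Matrix (Fin k ⊕ Fin l) (Fin k ⊕ Fin l) ℝ) (hVmeas : Measurable Vhat)
    (hindep : IndepFun Vhat YZ P)
    (hVinvInt : ∀ a b, Integrable (fun ω => (Vhat ω)⁻¹ a b) P)
    (hProdInt : ∀ a b, Integrable
      (fun ω => (Vhat ω)⁻¹ a b * (YZ ω b - (H *ᵥ Sum.elim β γ) b)) P)
    (Z₀ : Ω → ℝ) (hZ₀int : Integrable Z₀ P)
    (hZ₀mean : ∫ ω, Z₀ ω ∂P = ρ * (f₀ ⬝ᵥ β) + g₀ ⬝ᵥ γ)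
    (Zhat : Ω → ℝ)
    (hZhat : ∀ ω, Zhat ω = ρ * (f₀ ⬝ᵥ β) + g₀ ⬝ᵥ γ
        + C ⬝ᵥ ((Vhat ω)⁻¹ *ᵥ (YZ ω - H *ᵥ Sum.elim β γ)))
    (hZhatInt : Integrable Zhat P) :
    ∫ ω, (Zhat ω - Z₀ ω) ∂P = 0 := by
  set m := H *ᵥ Sum.elim β γ with hm
  have key : ∀ a b, ∫ ω, (Vhat ω)⁻¹ a b * (YZ ω b - m b) ∂P = 0 := by
    intro a b
    have hind : IndepFun (fun ω => (Vhat ω)⁻¹ a b) (fun ω => YZ ω b - m b) P :=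
      hindep.comp (measurable_inv_entry a b) ((measurable_pi_apply b).sub measurable_const)
    have hY : Integrable (fun ω => YZ ω b - m b) P := (hYZint b).sub (integrable_const _)
    rw [show (fun ω => (Vhat ω)⁻¹ a b * (YZ ω b - m b))
        = (fun ω => (Vhat ω)⁻¹ a b) * (fun ω => YZ ω b - m b) from rfl,
      hind.integral_mul_eq_mul_integral (hVinvInt a b).aestronglyMeasurable hY.aestronglyMeasurable,
      integral_sub (hYZint b) (integrable_const _), hmean b, integral_const]
    simp
  have hZhatMean : ∫ ω, Zhat ω ∂P = ρ * (f₀ ⬝ᵥ β) + g₀ ⬝ᵥ γ := by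
    have heq : Zhat = fun ω => ρ * (f₀ ⬝ᵥ β) + g₀ ⬝ᵥ γ
        + ∑ a, ∑ b, C a * ((Vhat ω)⁻¹ a b * (YZ ω b - m b)) := by
      funext ω
      rw [hZhat ω]
      simp only [dotProduct, Matrix.mulVec, Pi.sub_apply, Finset.mul_sum, mul_assoc]
    rw [heq]
    have hintsum : Integrable (fun ω => ∑ a, ∑ b, C a * ((Vhat ω)⁻¹ a b * (YZ ω b - m b))) P :=
      integrable_finset_sum _ fun a _ =>
        integrable_finset_sum _ fun b _ => (hProdInt a b).const_mul _
    rw [integral_add (integrable_const _) hintsum, integral_const]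
    simp only [measure_univ, probReal_univ, ENNReal.toReal_one, one_smul]
    rw [integral_finset_sum _ fun a _ =>
        integrable_finset_sum _ fun b _ => (hProdInt a b).const_mul _]
    have : ∀ a, ∫ ω, ∑ b, C a * ((Vhat ω)⁻¹ a b * (YZ ω b - m b)) ∂P = 0 := by
      intro a
      rw [integral_finset_sum _ fun b _ => (hProdInt a b).const_mul _]
      refine Finset.sum_eq_zero fun b _ => ?_
      rw [integral_const_mul, key a b, mul_zero]
    rw [Finset.sum_eq_zero fun a _ => this a, add_zero]
  rw [integral_sub hZhatInt hZ₀int, hZhatMean, hZ₀mean, sub_self]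
end

section
/- In the two-point CRN model, the optimal MSE as a function of the CRN correlation ω ∈ [0,1] equals MSE*(ω) = ρ²τ_M² + τ_W² - 2ρ²τ_M⁴r₀²/(τ_M²(1+r₁₂)+v(1+ω)) - r₀²(ρ²τ_M² + τ_W² - ρ²τ_M⁴(1+r₁₂)/(τ_M²(1+r₁₂)+v(1+ω)))² · A(ω)/B(ω), where A(ω) = (τ_M²+v)² - (τ_M²r₁₂+vω)² and B(ω) = (ρ²τ_M²+τ_W²+σ_ζ²)A(ω) - ρ²τ_M⁴[(τ_M²+v)(1+r₁₂²) - 2r₁₂(τ_M²r₁₂+vω)]. -/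
open Matrix

set_option maxHeartbeats 4000000 in
/-- In the two-point CRN model (k=2 design points, ℓ=1 observation point),
the optimal MSE as a function of the CRN correlation `ω ∈ [0,1]` equals the stated
closed-form rational expression with `A(ω) = (τ_M²+v)² - (τ_M²r₁₂+vω)²` and
`B(ω) = (ρ²τ_M²+τ_W²+σ_ζ²)A(ω) - ρ²τ_M⁴[(τ_M²+v)(1+r₁₂²) - 2r₁₂(τ_M²r₁₂+vω)]`.
Here `tM2 = τ_M²`, `tW2 = τ_W²`, `sz2 = σ_ζ²`. -/
theorem two_point_crn_mse_formula
    (tM2 tW2 v sz2 ρ r0 r12 ω : ℝ)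
    (htM2 : 0 < tM2) (htW2 : 0 < tW2) (hv : 0 < v) (hsz : 0 ≤ sz2)
    (hr0 : 0 < r0) (hr0' : r0 ≤ 1) (hr12 : 0 ≤ r12) (hr12' : r12 < 1)
    (hω : ω ∈ Set.Icc (0 : ℝ) 1) (hρ : ρ ≠ 0)
    (V : Matrix (Fin 3) (Fin 3) ℝ)
    (hV : V = !![tM2 + v, tM2 * r12 + v * ω, ρ * tM2;
                 tM2 * r12 + v * ω, tM2 + v, ρ * tM2 * r12;
                 ρ * tM2, ρ * tM2 * r12, ρ ^ 2 * tM2 + tW2 + sz2])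
    (C : Fin 3 → ℝ)
    (hC : C = ![ρ * tM2 * r0, ρ * tM2 * r0, ρ ^ 2 * tM2 * r0 + tW2 * r0])
    (A B : ℝ)
    (hA : A = (tM2 + v) ^ 2 - (tM2 * r12 + v * ω) ^ 2)
    (hB : B = (ρ ^ 2 * tM2 + tW2 + sz2) * A
        - ρ ^ 2 * tM2 ^ 2 * ((tM2 + v) * (1 + r12 ^ 2) - 2 * r12 * (tM2 * r12 + v * ω)))
    (hVdet : IsUnit V.det) (hBne : B ≠ 0) :
    ρ ^ 2 * tM2 + tW2 - C ⬝ᵥ (V⁻¹ *ᵥ C)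
      = ρ ^ 2 * tM2 + tW2
        - 2 * ρ ^ 2 * tM2 ^ 2 * r0 ^ 2 / (tM2 * (1 + r12) + v * (1 + ω))
        - r0 ^ 2 * (ρ ^ 2 * tM2 + tW2
            - ρ ^ 2 * tM2 ^ 2 * (1 + r12) / (tM2 * (1 + r12) + v * (1 + ω))) ^ 2
          * (A / B) := by
  have hD : tM2 * (1 + r12) + v * (1 + ω) ≠ 0 := by
    have h1 : (0:ℝ) < 1 + r12 := by linarith
    have h2 : (0:ℝ) < 1 + ω := by have := hω.1; linarith
    positivity
  have hdet : V.det ≠ 0 := hVdet.ne_zero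
  rw [Matrix.inv_def, Ring.inverse_eq_inv']
  subst hA hB hV hC
  simp only [Matrix.det_fin_three, Matrix.of_apply, Matrix.cons_val', Matrix.cons_val_zero,
    Matrix.cons_val_one, Matrix.head_cons, Matrix.empty_val', Matrix.cons_val_fin_one,
    Matrix.head_fin_const, Matrix.cons_val_two, Matrix.tail_cons] at hdet
  rw [Matrix.adjugate_fin_three, Matrix.det_fin_three]
  simp only [Matrix.smul_mulVec, Matrix.mulVec, dotProduct, Fin.sum_univ_three,
    Matrix.cons_val', Matrix.cons_val_zero, Matrix.cons_val_one, Matrix.head_cons,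
    Matrix.empty_val', Matrix.cons_val_fin_one, Matrix.head_fin_const, Matrix.cons_val_two,
    Matrix.tail_cons, Pi.smul_apply, smul_eq_mul, Matrix.smul_apply, Matrix.of_apply]
  generalize hd : ((tM2 + v) * (tM2 + v) * (ρ ^ 2 * tM2 + tW2 + sz2) - (tM2 + v) * (ρ * tM2 * r12) * (ρ * tM2 * r12) -
            (tM2 * r12 + v * ω) * (tM2 * r12 + v * ω) * (ρ ^ 2 * tM2 + tW2 + sz2) +
          (tM2 * r12 + v * ω) * (ρ * tM2 * r12) * (ρ * tM2) +
        ρ * tM2 * (tM2 * r12 + v * ω) * (ρ * tM2 * r12) -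
      ρ * tM2 * (tM2 + v) * (ρ * tM2)) = d at hdet ⊢
  rw [show (ρ ^ 2 * tM2 + tW2 + sz2) * ((tM2 + v) ^ 2 - (tM2 * r12 + v * ω) ^ 2)
      - ρ ^ 2 * tM2 ^ 2 * ((tM2 + v) * (1 + r12 ^ 2) - 2 * r12 * (tM2 * r12 + v * ω)) = d by
    rw [← hd]; ring]
  field_simp
  rw [← hd]
  ring
end

section
/- In the two-point CRN model with ρ ≠ 0, if σ_ζ² ≥ τ_W²r₁₂ + v(ρ² + τ_W²/τ_M²), then MSE*(ω) is increasing in ω on [0,1]. -/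
open Matrix


/-- Auxiliary algebraic identity used to put the derivative of the MSE
into a factored form (all the structure of the model is abstracted into atoms). -/
lemma two_point_crn_mse_increasing_aux (u1 u2 s0 c d0 a b n3 k : ℝ)
    (hd0 : d0 ≠ 0) (hb : b ≠ 0) (hcd : c * d0 = k) :
    (u1 / d0 ^ 2 - (s0 * (2 * c * (u2 / d0 ^ 2)) * (a / b) + s0 * c ^ 2 * (n3 / b ^ 2)))
        * (d0 ^ 3 * b ^ 2)
      = u1 * (b ^ 2 * d0) - 2 * s0 * k * u2 * (a * b) - s0 * k ^ 2 * (n3 * d0) := by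
  subst hcd
  field_simp
  ring

set_option maxHeartbeats 1000000 in
/-- In the two-point CRN model with `ρ ≠ 0`, if
`σ_ζ² ≥ τ_W²r₁₂ + v(ρ² + τ_W²/τ_M²)`, then the optimal MSE
`MSE*(ω)` (given by the explicit rational formula) is increasing in `ω` on `[0,1]`.
Here `tM2 = τ_M²`, `tW2 = τ_W²`, `sz2 = σ_ζ²`. -/
theorem two_point_crn_mse_increasing
    (tM2 tW2 v sz2 ρ r0 r12 : ℝ)
    (htM2 : 0 < tM2) (htW2 : 0 < tW2) (hv : 0 < v) (hsz : 0 ≤ sz2)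
    (hr0 : 0 < r0) (hr0' : r0 ≤ 1) (hr12 : 0 ≤ r12) (hr12' : r12 < 1) (hρ : ρ ≠ 0)
    (A B MSE : ℝ → ℝ)
    (hA : ∀ ω, A ω = (tM2 + v) ^ 2 - (tM2 * r12 + v * ω) ^ 2)
    (hB : ∀ ω, B ω = (ρ ^ 2 * tM2 + tW2 + sz2) * A ω
        - ρ ^ 2 * tM2 ^ 2 * ((tM2 + v) * (1 + r12 ^ 2) - 2 * r12 * (tM2 * r12 + v * ω)))
    (hBpos : ∀ ω ∈ Set.Icc (0 : ℝ) 1, 0 < B ω)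
    (hMSE : ∀ ω, MSE ω = ρ ^ 2 * tM2 + tW2
        - 2 * ρ ^ 2 * tM2 ^ 2 * r0 ^ 2 / (tM2 * (1 + r12) + v * (1 + ω))
        - r0 ^ 2 * (ρ ^ 2 * tM2 + tW2
            - ρ ^ 2 * tM2 ^ 2 * (1 + r12) / (tM2 * (1 + r12) + v * (1 + ω))) ^ 2
          * (A ω / B ω))
    (hσ : tW2 * r12 + v * (ρ ^ 2 + tW2 / tM2) ≤ sz2) :
    StrictMonoOn MSE (Set.Icc 0 1) := by
  have hp : (0:ℝ) < ρ ^ 2 := by positivity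
  have hAf : A = fun ω => (tM2 + v) ^ 2 - (tM2 * r12 + v * ω) ^ 2 := funext hA
  have hBf : B = fun ω => (ρ ^ 2 * tM2 + tW2 + sz2) * A ω
      - ρ ^ 2 * tM2 ^ 2 * ((tM2 + v) * (1 + r12 ^ 2) - 2 * r12 * (tM2 * r12 + v * ω)) :=
    funext hB
  have hMSEf : MSE = fun ω => ρ ^ 2 * tM2 + tW2
      - 2 * ρ ^ 2 * tM2 ^ 2 * r0 ^ 2 / (tM2 * (1 + r12) + v * (1 + ω))
      - r0 ^ 2 * (ρ ^ 2 * tM2 + tW2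
          - ρ ^ 2 * tM2 ^ 2 * (1 + r12) / (tM2 * (1 + r12) + v * (1 + ω))) ^ 2
        * (A ω / B ω) := funext hMSE
  have hDpos : ∀ ω ∈ Set.Icc (0:ℝ) 1, 0 < tM2 * (1 + r12) + v * (1 + ω) := by
    intro ω hω
    have := hω.1
    nlinarith
  have hAc : Continuous A := by rw [hAf]; fun_prop
  have hBc : Continuous B := by rw [hBf]; fun_prop
  have hDc : Continuous (fun ω : ℝ => tM2 * (1 + r12) + v * (1 + ω)) := by fun_prop
  have hcont : ContinuousOn MSE (Set.Icc 0 1) := by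
    rw [hMSEf]
    apply ContinuousOn.sub
    · apply ContinuousOn.sub continuousOn_const
      exact ContinuousOn.div continuousOn_const hDc.continuousOn
        (fun ω hω => (hDpos ω hω).ne')
    · apply ContinuousOn.mul
      · apply ContinuousOn.mul continuousOn_const
        apply ContinuousOn.pow
        apply ContinuousOn.sub continuousOn_const
        exact ContinuousOn.div continuousOn_const hDc.continuousOn
          (fun ω hω => (hDpos ω hω).ne')
      · exact ContinuousOn.div hAc.continuousOn hBc.continuousOn
          (fun ω hω => (hBpos ω hω).ne')
  apply strictMonoOn_of_deriv_pos (convex_Icc 0 1) hcont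
  intro x hx
  rw [interior_Icc] at hx
  obtain ⟨hx0, hx1⟩ := hx
  have hxIcc : x ∈ Set.Icc (0:ℝ) 1 := ⟨hx0.le, hx1.le⟩
  have hD0 : (0:ℝ) < tM2 * (1 + r12) + v * (1 + x) := hDpos x hxIcc
  have hBx : 0 < B x := hBpos x hxIcc
  -- key positivity facts
  have hx2 : x ^ 2 < 1 := by nlinarith only [hx0, hx1]
  have hrx : r12 * x < 1 := by nlinarith only [hr12, hr12', hx0, hx1]
  have hr2 : r12 ^ 2 < 1 := by nlinarith only [hr12, hr12']
  have hQ : (0:ℝ) ≤ v ^ 2 * (1 - x ^ 2) + 2 * tM2 * v * (1 - r12 * x)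
      + tM2 ^ 2 * (1 - r12 ^ 2) := by
    nlinarith only [mul_pos hv hv, mul_pos htM2 hv, mul_pos htM2 htM2, hx2, hrx, hr2]
  have hkey : tM2 * (tW2 * r12 + v * (ρ ^ 2 + tW2 / tM2))
      = tM2 * tW2 * r12 + v * ρ ^ 2 * tM2 + v * tW2 := by
    field_simp
    ring
  have hms : tM2 * tW2 * r12 + v * ρ ^ 2 * tM2 + v * tW2 ≤ tM2 * sz2 := by
    have h1 := mul_le_mul_of_nonneg_left hσ htM2.le
    rw [hkey] at h1
    exact h1
  have hx1' : (0:ℝ) < 1 - x := by linarith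
  have h1x : (0:ℝ) < 1 + x := by linarith
  have g1 : (0:ℝ) < tW2 * v ^ 3 * (1 - x ^ 2) := by
    nlinarith only [mul_pos htW2 (pow_pos hv 3), hx2]
  have g2 : (0:ℝ) ≤ ρ ^ 2 * tM2 * v ^ 3 * (1 - x ^ 2) := by
    nlinarith only [mul_pos (mul_pos hp htM2) (pow_pos hv 3), hx2]
  have g3 : (0:ℝ) ≤ tM2 * tW2 * v ^ 2 * ((1 - x) * (2 + x + r12)) := by
    have : (0:ℝ) ≤ (1 - x) * (2 + x + r12) := by nlinarith only [hx0, hx1, hr12]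
    positivity
  have g4 : (0:ℝ) ≤ ρ ^ 2 * tM2 ^ 2 * v ^ 2 * ((1 - x) * (2 + x - r12 * x)) := by
    have : (0:ℝ) ≤ (1 - x) * (2 + x - r12 * x) := by nlinarith only [hx0, hx1, hrx]
    positivity
  have g5 : (0:ℝ) ≤ tM2 ^ 2 * tW2 * v * ((1 - x) * (1 + r12)) := by
    have : (0:ℝ) ≤ (1 - x) * (1 + r12) := by nlinarith only [hx1, hr12]
    positivity
  have g6 : (0:ℝ) ≤ ρ ^ 2 * tM2 ^ 3 * v * ((1 - x) * (1 - r12 ^ 2)) := by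
    have : (0:ℝ) ≤ (1 - x) * (1 - r12 ^ 2) := by nlinarith only [hx1, hr2]
    positivity
  have hiden : tM2 * (((ρ ^ 2 * tM2 + tW2 + sz2) * ((tM2 + v) ^ 2 - (tM2 * r12 + v * x) ^ 2) - ρ ^ 2 * tM2 ^ 2 * ((tM2 + v) * (1 + r12 ^ 2) - 2 * r12 * (tM2 * r12 + v * x))) - (ρ ^ 2 * tM2 * v * (1 + x) + tW2 * (tM2 * (1 + r12) + v * (1 + x))) * (tM2 * (1 - r12 ^ 2) + v * (1 - r12 * x)))
      = (tM2 * sz2 - (tM2 * tW2 * r12 + v * ρ ^ 2 * tM2 + v * tW2))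
          * (v ^ 2 * (1 - x ^ 2) + 2 * tM2 * v * (1 - r12 * x) + tM2 ^ 2 * (1 - r12 ^ 2))
        + (tW2 * v ^ 3 * (1 - x ^ 2) + ρ ^ 2 * tM2 * v ^ 3 * (1 - x ^ 2)
          + tM2 * tW2 * v ^ 2 * ((1 - x) * (2 + x + r12))
          + ρ ^ 2 * tM2 ^ 2 * v ^ 2 * ((1 - x) * (2 + x - r12 * x))
          + tM2 ^ 2 * tW2 * v * ((1 - x) * (1 + r12))
          + ρ ^ 2 * tM2 ^ 3 * v * ((1 - x) * (1 - r12 ^ 2))) := by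
    ring
  have hTm : 0 < tM2 * (((ρ ^ 2 * tM2 + tW2 + sz2) * ((tM2 + v) ^ 2 - (tM2 * r12 + v * x) ^ 2) - ρ ^ 2 * tM2 ^ 2 * ((tM2 + v) * (1 + r12 ^ 2) - 2 * r12 * (tM2 * r12 + v * x))) - (ρ ^ 2 * tM2 * v * (1 + x) + tW2 * (tM2 * (1 + r12) + v * (1 + x))) * (tM2 * (1 - r12 ^ 2) + v * (1 - r12 * x))) := by
    rw [hiden]
    have h1 := mul_nonneg (sub_nonneg.2 hms) hQ
    linarith only [h1, g1, g2, g3, g4, g5, g6]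
  have hT : 0 < (((ρ ^ 2 * tM2 + tW2 + sz2) * ((tM2 + v) ^ 2 - (tM2 * r12 + v * x) ^ 2) - ρ ^ 2 * tM2 ^ 2 * ((tM2 + v) * (1 + r12 ^ 2) - 2 * r12 * (tM2 * r12 + v * x))) - (ρ ^ 2 * tM2 * v * (1 + x) + tW2 * (tM2 * (1 + r12) + v * (1 + x))) * (tM2 * (1 - r12 ^ 2) + v * (1 - r12 * x))) := by
    by_contra h
    push_neg at h
    nlinarith only [hTm, mul_nonneg htM2.le (neg_nonneg.2 h)]
  have hK : 0 < ρ ^ 2 * tM2 * v * (1 + x) + tW2 * (tM2 * (1 + r12) + v * (1 + x)) := by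
    nlinarith only [mul_pos (mul_pos (mul_pos hp htM2) hv) h1x, mul_pos htW2 hD0]
  have hFv : 0 < tM2 * (1 - r12 ^ 2) + v * (1 - r12 * x) + v * (x - r12) := by
    nlinarith only [mul_pos htM2 (by nlinarith only [hr12, hr12'] : (0:ℝ) < 1 - r12 ^ 2),
      mul_pos hv (mul_pos (by linarith only [hr12'] : (0:ℝ) < 1 - r12) h1x)]
  have hT2 : 0 < (((ρ ^ 2 * tM2 + tW2 + sz2) * ((tM2 + v) ^ 2 - (tM2 * r12 + v * x) ^ 2) - ρ ^ 2 * tM2 ^ 2 * ((tM2 + v) * (1 + r12 ^ 2) - 2 * r12 * (tM2 * r12 + v * x))) + (ρ ^ 2 * tM2 * v * (1 + x) + tW2 * (tM2 * (1 + r12) + v * (1 + x))) * (v * (x - r12))) := by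
    nlinarith only [hT, mul_pos hK hFv]
  -- derivative pieces
  have hq : HasDerivAt (fun ω : ℝ => tM2 * r12 + v * ω) v x := by
    exact (((hasDerivAt_id x).const_mul v).const_add (tM2 * r12)).congr_deriv (by simp)
  have hDd : HasDerivAt (fun ω : ℝ => tM2 * (1 + r12) + v * (1 + ω)) v x := by
    exact (((hasDerivAt_const x (1:ℝ)).add (hasDerivAt_id x)).const_mul v).const_add
      (tM2 * (1 + r12)) |>.congr_deriv (by simp)
  have hA' : HasDerivAt A (-(2 * (tM2 * r12 + v * x) * v)) x := by
    rw [hAf]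
    have h := (hasDerivAt_const x ((tM2 + v) ^ 2)).sub (hq.pow 2)
    refine h.congr_deriv ?_
    push_cast
    ring
  have hE : HasDerivAt
      (fun ω : ℝ => (tM2 + v) * (1 + r12 ^ 2) - 2 * r12 * (tM2 * r12 + v * ω))
      (-(2 * r12 * v)) x := by
    have h := (hasDerivAt_const x ((tM2 + v) * (1 + r12 ^ 2))).sub (hq.const_mul (2 * r12))
    refine h.congr_deriv ?_
    ring
  have hB' : HasDerivAt B
      ((ρ ^ 2 * tM2 + tW2 + sz2) * (-(2 * (tM2 * r12 + v * x) * v))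
        - ρ ^ 2 * tM2 ^ 2 * (-(2 * r12 * v))) x := by
    rw [hBf]
    exact (hA'.const_mul (ρ ^ 2 * tM2 + tW2 + sz2)).sub (hE.const_mul (ρ ^ 2 * tM2 ^ 2))
  have hCd : HasDerivAt
      (fun ω : ℝ => ρ ^ 2 * tM2 + tW2
        - ρ ^ 2 * tM2 ^ 2 * (1 + r12) / (tM2 * (1 + r12) + v * (1 + ω)))
      (ρ ^ 2 * tM2 ^ 2 * (1 + r12) * v / (tM2 * (1 + r12) + v * (1 + x)) ^ 2) x := by
    have h := HasDerivAt.const_sub (ρ ^ 2 * tM2 + tW2)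
      ((hasDerivAt_const x (ρ ^ 2 * tM2 ^ 2 * (1 + r12))).div hDd hD0.ne')
    refine h.congr_deriv ?_
    field_simp
    ring
  have hC2 : HasDerivAt
      (fun ω : ℝ => (ρ ^ 2 * tM2 + tW2
        - ρ ^ 2 * tM2 ^ 2 * (1 + r12) / (tM2 * (1 + r12) + v * (1 + ω))) ^ 2)
      (2 * (ρ ^ 2 * tM2 + tW2
          - ρ ^ 2 * tM2 ^ 2 * (1 + r12) / (tM2 * (1 + r12) + v * (1 + x)))
        * (ρ ^ 2 * tM2 ^ 2 * (1 + r12) * v / (tM2 * (1 + r12) + v * (1 + x)) ^ 2)) x := by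
    have h := hCd.pow 2
    refine h.congr_deriv ?_
    push_cast
    ring
  have hAB : HasDerivAt (fun ω : ℝ => A ω / B ω)
      (((-(2 * (tM2 * r12 + v * x) * v)) * B x
        - A x * ((ρ ^ 2 * tM2 + tW2 + sz2) * (-(2 * (tM2 * r12 + v * x) * v))
          - ρ ^ 2 * tM2 ^ 2 * (-(2 * r12 * v)))) / B x ^ 2) x := hA'.div hB' hBx.ne'
  have hfirst : HasDerivAt
      (fun ω : ℝ => ρ ^ 2 * tM2 + tW2
        - 2 * ρ ^ 2 * tM2 ^ 2 * r0 ^ 2 / (tM2 * (1 + r12) + v * (1 + ω)))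
      (2 * ρ ^ 2 * tM2 ^ 2 * r0 ^ 2 * v / (tM2 * (1 + r12) + v * (1 + x)) ^ 2) x := by
    have h := HasDerivAt.const_sub (ρ ^ 2 * tM2 + tW2)
      ((hasDerivAt_const x (2 * ρ ^ 2 * tM2 ^ 2 * r0 ^ 2)).div hDd hD0.ne')
    refine h.congr_deriv ?_
    field_simp
    ring
  have hd : HasDerivAt MSE (2 * ρ ^ 2 * tM2 ^ 2 * r0 ^ 2 * v / (tM2 * (1 + r12) + v * (1 + x)) ^ 2 - (r0 ^ 2 * (2 * (ρ ^ 2 * tM2 + tW2 - ρ ^ 2 * tM2 ^ 2 * (1 + r12) / (tM2 * (1 + r12) + v * (1 + x))) * (ρ ^ 2 * tM2 ^ 2 * (1 + r12) * v / (tM2 * (1 + r12) + v * (1 + x)) ^ 2)) * (A x / B x) + r0 ^ 2 * (ρ ^ 2 * tM2 + tW2 - ρ ^ 2 * tM2 ^ 2 * (1 + r12) / (tM2 * (1 + r12) + v * (1 + x))) ^ 2 * (((-(2 * (tM2 * r12 + v * x) * v)) * B x - A x * ((ρ ^ 2 * tM2 + tW2 + sz2) * (-(2 * (tM2 * r12 +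 v * x) * v)) - ρ ^ 2 * tM2 ^ 2 * (-(2 * r12 * v)))) / B x ^ 2))) x := by
    rw [hMSEf]
    exact hfirst.sub ((HasDerivAt.const_mul (r0 ^ 2) hC2).mul hAB)
  -- clear denominators: derivative * positive = explicit positive numerator
  have hCD : (ρ ^ 2 * tM2 + tW2 - ρ ^ 2 * tM2 ^ 2 * (1 + r12) / (tM2 * (1 + r12) + v * (1 + x))) * (tM2 * (1 + r12) + v * (1 + x))
      = ρ ^ 2 * tM2 * v * (1 + x) + tW2 * (tM2 * (1 + r12) + v * (1 + x)) := by
    field_simp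
    ring
  have hEq := two_point_crn_mse_increasing_aux
    (2 * ρ ^ 2 * tM2 ^ 2 * r0 ^ 2 * v)
    (ρ ^ 2 * tM2 ^ 2 * (1 + r12) * v) (r0 ^ 2)
    (ρ ^ 2 * tM2 + tW2 - ρ ^ 2 * tM2 ^ 2 * (1 + r12) / (tM2 * (1 + r12) + v * (1 + x)))
    ((tM2 * (1 + r12) + v * (1 + x))) (A x) (B x)
    ((-(2 * (tM2 * r12 + v * x) * v)) * B x
      - A x * ((ρ ^ 2 * tM2 + tW2 + sz2) * (-(2 * (tM2 * r12 + v * x) * v))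
        - ρ ^ 2 * tM2 ^ 2 * (-(2 * r12 * v))))
    (ρ ^ 2 * tM2 * v * (1 + x) + tW2 * (tM2 * (1 + r12) + v * (1 + x))) hD0.ne' hBx.ne' hCD
  have hNum : (2 * ρ ^ 2 * tM2 ^ 2 * r0 ^ 2 * v * (B x ^ 2 * (tM2 * (1 + r12) + v * (1 + x))) - 2 * r0 ^ 2 * (ρ ^ 2 * tM2 * v * (1 + x) + tW2 * (tM2 * (1 + r12) + v * (1 + x))) * (ρ ^ 2 * tM2 ^ 2 * (1 + r12) * v) * (A x * B x) - r0 ^ 2 * (ρ ^ 2 * tM2 * v * (1 + x) + tW2 * (tM2 * (1 + r12) + v * (1 + x))) ^ 2 * (((-(2 * (tM2 * r12 + v * x) * v)) * B x - A x * ((ρ ^ 2 * tM2 + tW2 + sz2) * (-(2 * (tM2 * r12 + v * x) * v)) - ρ ^ 2 * tM2 ^ 2 * (-(2 * r12 * v)))) * (tM2 * (1 + r12) + v * (1 + x)))) = 2 * ρ ^ 2 * tM2 ^ 2 * r0 ^ 2 * v * (tM2 * (1 + r12) + v * (1 + x)) * ((((ρ ^ 2 * tM2 + tW2 + sz2) *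 ((tM2 + v) ^ 2 - (tM2 * r12 + v * x) ^ 2) - ρ ^ 2 * tM2 ^ 2 * ((tM2 + v) * (1 + r12 ^ 2) - 2 * r12 * (tM2 * r12 + v * x))) - (ρ ^ 2 * tM2 * v * (1 + x) + tW2 * (tM2 * (1 + r12) + v * (1 + x))) * (tM2 * (1 - r12 ^ 2) + v * (1 - r12 * x))) * (((ρ ^ 2 * tM2 + tW2 + sz2) * ((tM2 + v) ^ 2 - (tM2 * r12 + v * x) ^ 2) - ρ ^ 2 * tM2 ^ 2 * ((tM2 + v) * (1 + r12 ^ 2) - 2 * r12 * (tM2 * r12 + v * x))) + (ρ ^ 2 * tM2 * v * (1 + x) + tW2 * (tM2 * (1 + r12) + v * (1 + x))) * (v * (x - r12)))) := by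
    rw [hB x, hA x]
    ring
  have hpos : 0 < (2 * ρ ^ 2 * tM2 ^ 2 * r0 ^ 2 * v / (tM2 * (1 + r12) + v * (1 + x)) ^ 2 - (r0 ^ 2 * (2 * (ρ ^ 2 * tM2 + tW2 - ρ ^ 2 * tM2 ^ 2 * (1 + r12) / (tM2 * (1 + r12) + v * (1 + x))) * (ρ ^ 2 * tM2 ^ 2 * (1 + r12) * v / (tM2 * (1 + r12) + v * (1 + x)) ^ 2)) * (A x / B x) + r0 ^ 2 * (ρ ^ 2 * tM2 + tW2 - ρ ^ 2 * tM2 ^ 2 * (1 + r12) / (tM2 * (1 + r12) + v * (1 + x))) ^ 2 * (((-(2 * (tM2 * r12 + v * x) * v)) * B x - A x * ((ρ ^ 2 * tM2 + tW2 + sz2) * (-(2 * (tM2 * r12 + v * x) * v)) - ρ ^ 2 * tM2 ^ 2 * (-(2 * r12 * v)))) / B x ^ 2))) * ((tM2 * (1 + r12) + v * (1 + x)) ^ 3 * B x ^ 2) := by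
    rw [hEq, hNum]
    exact mul_pos (mul_pos (by positivity) hD0) (mul_pos hT hT2)
  rw [hd.deriv]
  rcases mul_pos_iff.1 hpos with ⟨hd1, _⟩ | ⟨_, h2⟩
  · exact hd1
  · exact absurd h2 (by push_neg; exact (mul_pos (pow_pos hD0 3) (pow_pos hBx 2)).le)
end

section
/- In the two-point CRN model, the function H(ω) = (τ_M²+v)(τ_M²r₁₂+vω)(1-r₁₂)²C(ω)² - (1-r₁₂)[τ_M²(1-r₁₂)+v(1-ω)]C(ω)D(ω) - D(ω)², with C(ω) = ρ²τ_M²v(1+ω) + τ_W²[τ_M²(1+r₁₂)+v(1+ω)] and D(ω) = σ_ζ²A(ω) + ρ²τ_M⁴v(1-r₁₂)(r₁₂-ω), is strictly increasing on (0,1). -/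
set_option maxHeartbeats 1000000 in
/-- In the two-point CRN model, the function
`H(ω) = (τ_M²+v)(τ_M²r₁₂+vω)(1-r₁₂)²C(ω)² - (1-r₁₂)[τ_M²(1-r₁₂)+v(1-ω)]C(ω)D(ω) - D(ω)²`
with `C(ω) = ρ²τ_M²v(1+ω) + τ_W²[τ_M²(1+r₁₂)+v(1+ω)]` and
`D(ω) = σ_ζ²A(ω) + ρ²τ_M⁴v(1-r₁₂)(r₁₂-ω)`, where
`A(ω) = (τ_M²+v)² - (τ_M²r₁₂+vω)²`, is strictly increasing on `(0,1)`.
Here `tM2 = τ_M²`, `tW2 = τ_W²`, `sz2 = σ_ζ²`. -/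
theorem two_point_crn_H_strictMono
    (tM2 tW2 v sz2 ρ r12 : ℝ)
    (htM2 : 0 < tM2) (htW2 : 0 < tW2) (hv : 0 < v) (hsz : 0 ≤ sz2)
    (hr12 : 0 ≤ r12) (hr12' : r12 < 1)
    (A C D H : ℝ → ℝ)
    (hA : ∀ ω, A ω = (tM2 + v) ^ 2 - (tM2 * r12 + v * ω) ^ 2)
    (hC : ∀ ω, C ω = ρ ^ 2 * tM2 * v * (1 + ω)
        + tW2 * (tM2 * (1 + r12) + v * (1 + ω)))
    (hD : ∀ ω, D ω = sz2 * A ω + ρ ^ 2 * tM2 ^ 2 * v * (1 - r12) * (r12 - ω))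
    (hH : ∀ ω, H ω = (tM2 + v) * (tM2 * r12 + v * ω) * (1 - r12) ^ 2 * (C ω) ^ 2
        - (1 - r12) * (tM2 * (1 - r12) + v * (1 - ω)) * (C ω) * (D ω)
        - (D ω) ^ 2) :
    StrictMonoOn H (Set.Ioo 0 1) := by
  have hlin : ∀ (a b y : ℝ), HasDerivAt (fun ω : ℝ => a + b*ω) b y := by
    intro a b y
    simpa using (((hasDerivAt_id y).const_mul b).const_add a)
  have hquad : ∀ (a b c y : ℝ), HasDerivAt (fun ω : ℝ => a + b*ω + c*ω^2) (b + 2*c*y) y := by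
    intro a b c y
    have h := (hlin a b y).add ((hasDerivAt_pow 2 y).const_mul c)
    have he : b + c*((2:ℕ)*y^(2-1)) = b + 2*c*y := by push_cast; ring
    exact he ▸ h
  have hCfun : C = fun ω : ℝ => (ρ^2*tM2*v + tW2*(tM2*(1+r12)+v)) + (ρ^2*tM2*v + tW2*v)*ω := by
    funext ω; rw [hC]; ring
  have hDfun : D = fun ω : ℝ => (sz2*((tM2+v)^2 - tM2^2*r12^2) + ρ^2*tM2^2*v*(1-r12)*r12)
      + (-(2*sz2*tM2*r12*v) - ρ^2*tM2^2*v*(1-r12))*ω + (-(sz2*v^2))*ω^2 := by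
    funext ω; rw [hD, hA]; ring
  have hHfun : H = fun ω : ℝ =>
      ((tM2+v)*tM2*r12*(1-r12)^2 + (tM2+v)*v*(1-r12)^2*ω)*(C ω)^2
      - ((1-r12)*(tM2*(1-r12)+v) + (-((1-r12)*v))*ω)*(C ω)*(D ω)
      - (D ω)^2 := by
    funext ω; rw [hH]; ring
  apply strictMonoOn_of_deriv_pos (convex_Ioo (0:ℝ) 1)
  · rw [hHfun, hCfun, hDfun]; fun_prop
  · intro x hx
    rw [interior_Ioo] at hx
    obtain ⟨hx0, hx1⟩ := hx
    have hc' : HasDerivAt C (ρ^2*tM2*v + tW2*v) x := by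
      rw [hCfun]; exact hlin _ _ x
    have hd' : HasDerivAt D ((-(2*sz2*tM2*r12*v) - ρ^2*tM2^2*v*(1-r12)) + 2*(-(sz2*v^2))*x) x := by
      rw [hDfun]; exact hquad _ _ _ x
    have hder := (((hlin ((tM2+v)*tM2*r12*(1-r12)^2) ((tM2+v)*v*(1-r12)^2) x).mul (hc'.pow 2)).sub
        (((hlin ((1-r12)*(tM2*(1-r12)+v)) (-((1-r12)*v)) x).mul hc').mul hd')).sub (hd'.pow 2)
    simp only [Pi.mul_apply, Pi.pow_apply] at hder
    replace hder := hder.congr_of_eventuallyEq (f₁ := H) (Filter.Eventually.of_forall fun ω => congrFun hHfun ω)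
    rw [hder.deriv, hC, hD, hA]
    -- positivity of the derivative
    have hx0' : (0:ℝ) ≤ x := hx0.le
    have h1x : (0:ℝ) ≤ 1 - x := by linarith
    have h1px : (0:ℝ) < 1 + x := by linarith
    have hrr : (0:ℝ) < 1 - r12 := by linarith
    have h1pr : (0:ℝ) < 1 + r12 := by linarith
    have hrx : (0:ℝ) ≤ 1 - r12*x := by
      have h := mul_le_mul_of_nonneg_left hx1.le hr12
      simp only [mul_one] at h
      linarith
    have hx2 : (0:ℝ) ≤ x^2 := sq_nonneg x
    have hK : (0:ℝ) < tM2*(1+r12) + v*(1+x) := add_pos (mul_pos htM2 h1pr) (mul_pos hv h1px)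
    have hE1 : (0:ℝ) < tW2^2*(1-r12)^2 * ((tM2+v)*v*(tM2*(1+r12)+v*(1+x))*((tM2*(1+r12)+v*(1+x)) + 2*(tM2*r12+v*x))) := by
      have h2 : (0:ℝ) < (tM2*(1+r12)+v*(1+x)) + 2*(tM2*r12+v*x) := by
        have := mul_nonneg htM2.le hr12
        have := mul_nonneg hv.le hx0'
        linarith
      exact mul_pos (mul_pos (pow_pos htW2 2) (pow_pos hrr 2))
        (mul_pos (mul_pos (mul_pos (add_pos htM2 hv) hv) hK) h2)
    have hb1 : (0:ℝ) < 1 + 4*x + 3*x^2 := by linarith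
    have hb2 : (0:ℝ) < 5 + 12*x + 3*x^2 + 6*r12 + 10*r12*x := by
      have := mul_nonneg hr12 hx0'
      linarith
    have hb3 : (0:ℝ) < 1 + x + 2*r12 + r12*x + r12^2 := by
      have := mul_nonneg hr12 hx0'
      have := sq_nonneg r12
      linarith
    have hE2 : (0:ℝ) ≤ ρ^2*tW2*(1-r12)^2 * (2*tM2*v^4*(1+4*x+3*x^2) + tM2^2*v^3*(5+12*x+3*x^2+6*r12+10*r12*x) + 4*tM2^3*v^2*(1+x+2*r12+r12*x+r12^2) + tM2^4*v*(1+r12)^2) := by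
      have t1 := mul_pos (mul_pos (mul_pos (by norm_num : (0:ℝ) < 2) htM2) (pow_pos hv 4)) hb1
      have t2 := mul_pos (mul_pos (pow_pos htM2 2) (pow_pos hv 3)) hb2
      have t3 := mul_pos (mul_pos (mul_pos (by norm_num : (0:ℝ) < 4) (pow_pos htM2 3)) (pow_pos hv 2)) hb3
      have t4 := mul_pos (mul_pos (pow_pos htM2 4) hv) (pow_pos h1pr 2)
      have hP2 : (0:ℝ) < 2*tM2*v^4*(1+4*x+3*x^2) + tM2^2*v^3*(5+12*x+3*x^2+6*r12+10*r12*x) + 4*tM2^3*v^2*(1+x+2*r12+r12*x+r12^2) + tM2^4*v*(1+r12)^2 := by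
        linarith
      positivity
    have hE3 : (0:ℝ) ≤ ρ^4*(1-r12)^2 * (tM2^2*v^2*(tM2*(1+r12)+v*(1+x))*((tM2*(1+r12)+v*(1+x)) + 2*v*x)) := by
      have h2 : (0:ℝ) < (tM2*(1+r12)+v*(1+x)) + 2*v*x := by
        have := mul_nonneg hv.le hx0'
        linarith
      have h3 : (0:ℝ) < tM2^2*v^2*(tM2*(1+r12)+v*(1+x))*((tM2*(1+r12)+v*(1+x)) + 2*v*x) :=
        mul_pos (mul_pos (mul_pos (pow_pos htM2 2) (pow_pos hv 2)) hK) h2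
      positivity
    have hS : (0:ℝ) ≤ 4*v^4*x*(1-x)*(1+x) + 4*tM2*v^3*(2*x*(1-r12*x)+r12*(1-x)*(1+x)) + 4*tM2^2*v^2*(x*(1-r12)*(1+r12)+2*r12*(1-r12*x)) + 4*tM2^3*v*(r12*(1-r12)*(1+r12)) := by
      have s1 : (0:ℝ) ≤ 4*v^4*x*(1-x)*(1+x) :=
        mul_nonneg (mul_nonneg (mul_nonneg (by positivity) hx0') h1x) h1px.le
      have s2 : (0:ℝ) ≤ 4*tM2*v^3*(2*x*(1-r12*x)+r12*(1-x)*(1+x)) := by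
        have h2 : (0:ℝ) ≤ 2*x*(1-r12*x) := mul_nonneg (mul_nonneg (by norm_num : (0:ℝ) ≤ 2) hx0') hrx
        have h3 : (0:ℝ) ≤ r12*(1-x)*(1+x) := mul_nonneg (mul_nonneg hr12 h1x) h1px.le
        exact mul_nonneg (by positivity) (by linarith)
      have s3 : (0:ℝ) ≤ 4*tM2^2*v^2*(x*(1-r12)*(1+r12)+2*r12*(1-r12*x)) := by
        have h2 : (0:ℝ) ≤ x*(1-r12)*(1+r12) := mul_nonneg (mul_nonneg hx0' hrr.le) h1pr.le
        have h3 : (0:ℝ) ≤ 2*r12*(1-r12*x) := mul_nonneg (mul_nonneg (by norm_num : (0:ℝ) ≤ 2) hr12) hrx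
        exact mul_nonneg (by positivity) (by linarith)
      have s4 : (0:ℝ) ≤ 4*tM2^3*v*(r12*(1-r12)*(1+r12)) :=
        mul_nonneg (by positivity) (mul_nonneg (mul_nonneg hr12 hrr.le) h1pr.le)
      linarith
    have hE4 : (0:ℝ) ≤ sz2*(sz2+tW2*(1-r12)) * (4*v^4*x*(1-x)*(1+x) + 4*tM2*v^3*(2*x*(1-r12*x)+r12*(1-x)*(1+x)) + 4*tM2^2*v^2*(x*(1-r12)*(1+r12)+2*r12*(1-r12*x)) + 4*tM2^3*v*(r12*(1-r12)*(1+r12))) :=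
      mul_nonneg (mul_nonneg hsz (add_nonneg hsz (mul_nonneg htW2.le hrr.le))) hS
    have hT : (0:ℝ) ≤ 4*tM2*v^4*x*(1-x)*(1+x) + tM2^2*v^3*((1-r12)*((1+3*x)+3*x*(1-x)) + 4*r12*(1-x)*(1+3*x)) + 2*tM2^3*v^2*((1-r12)*(1+r12)*(1+x)+2*r12*(1-x)+2*r12^2*(1-x)) + tM2^4*v*((1+r12)^2*(1-r12)) := by
      have h13x : (0:ℝ) ≤ 1 + 3*x := by linarith
      have t1 : (0:ℝ) ≤ 4*tM2*v^4*x*(1-x)*(1+x) :=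
        mul_nonneg (mul_nonneg (mul_nonneg (by positivity) hx0') h1x) h1px.le
      have t2 : (0:ℝ) ≤ tM2^2*v^3*((1-r12)*((1+3*x)+3*x*(1-x)) + 4*r12*(1-x)*(1+3*x)) := by
        have h2 : (0:ℝ) ≤ (1-r12)*((1+3*x)+3*x*(1-x)) :=
          mul_nonneg hrr.le (by nlinarith [mul_nonneg hx0' h1x])
        have h3 : (0:ℝ) ≤ 4*r12*(1-x)*(1+3*x) :=
          mul_nonneg (mul_nonneg (mul_nonneg (by norm_num : (0:ℝ) ≤ 4) hr12) h1x) h13x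
        exact mul_nonneg (by positivity) (by linarith)
      have t3 : (0:ℝ) ≤ 2*tM2^3*v^2*((1-r12)*(1+r12)*(1+x)+2*r12*(1-x)+2*r12^2*(1-x)) := by
        have h2 : (0:ℝ) ≤ (1-r12)*(1+r12)*(1+x) := mul_nonneg (mul_nonneg hrr.le h1pr.le) h1px.le
        have h3 : (0:ℝ) ≤ 2*r12*(1-x) := mul_nonneg (mul_nonneg (by norm_num : (0:ℝ) ≤ 2) hr12) h1x
        have h4 : (0:ℝ) ≤ 2*r12^2*(1-x) := mul_nonneg (by positivity) h1x
        exact mul_nonneg (by positivity) (by linarith)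
      have t4 : (0:ℝ) ≤ tM2^4*v*((1+r12)^2*(1-r12)) :=
        mul_nonneg (by positivity) (mul_nonneg (pow_nonneg h1pr.le 2) hrr.le)
      linarith
    have hE5 : (0:ℝ) ≤ sz2*ρ^2*(1-r12) * (4*tM2*v^4*x*(1-x)*(1+x) + tM2^2*v^3*((1-r12)*((1+3*x)+3*x*(1-x)) + 4*r12*(1-x)*(1+3*x)) + 2*tM2^3*v^2*((1-r12)*(1+r12)*(1+x)+2*r12*(1-x)+2*r12^2*(1-x)) + tM2^4*v*((1+r12)^2*(1-r12))) :=
      mul_nonneg (mul_nonneg (mul_nonneg hsz (sq_nonneg ρ)) hrr.le) hT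
    push_cast
    linarith [hE1, hE2, hE3, hE4, hE5]
end
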